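/- arXiv:1703.07539 — 5 statements merged into one kernel-verified Lean document; each statement's English description precedes it below -/
import Mathlib

section
/- For any vectors v_1, ..., v_K in ℝⁿ (n ≥ 1), the frame potential satisfies Σ_{i=1}^K Σ_{j=1}^K ⟨v_j, v_i⟩² ≥ (1/n) (Σ_{i=1}^K ‖v_i‖²)². -/
open Matrix

/-- Frame potential lower bound: for any vectors `v 1, ..., v K` in `ℝⁿ` (`n ≥ 1`),
`∑ i ∑ j ⟨v j, v i⟩² ≥ (1/n) (∑ i ‖v i‖²)²`. -/
theorem stmt_2 (n K : ℕ) (hn : 1 ≤ n)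
    (v : Fin K → Fin n → ℝ) :
    (1 / (n : ℝ)) * (∑ i, v i ⬝ᵥ v i) ^ 2 ≤ ∑ i, ∑ j, (v j ⬝ᵥ v i) ^ 2 := by
  have key : ∑ i, ∑ j, (v j ⬝ᵥ v i) ^ 2
      = ∑ k : Fin n, ∑ l : Fin n, (∑ i, v i k * v i l) ^ 2 := by
    calc ∑ i, ∑ j, (v j ⬝ᵥ v i) ^ 2
        = ∑ i, ∑ j, ∑ k : Fin n, ∑ l : Fin n, (v i k * v i l) * (v j k * v j l) := by
          refine Finset.sum_congr rfl fun i _ => Finset.sum_congr rfl fun j _ => ?_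
          simp only [dotProduct, sq, Finset.sum_mul, Finset.mul_sum]
          exact Finset.sum_congr rfl fun k _ => Finset.sum_congr rfl fun l _ => by ring
      _ = ∑ k : Fin n, ∑ l : Fin n, ∑ i, ∑ j, (v i k * v i l) * (v j k * v j l) := by
          have h1 : ∀ i : Fin K, ∑ j, ∑ k : Fin n, ∑ l : Fin n, (v i k * v i l) * (v j k * v j l)
              = ∑ k : Fin n, ∑ l : Fin n, ∑ j, (v i k * v i l) * (v j k * v j l) := by
            intro i
            rw [Finset.sum_comm]
            exact Finset.sum_congr rfl fun k _ => Finset.sum_comm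
          simp only [h1]
          rw [Finset.sum_comm]
          exact Finset.sum_congr rfl fun k _ => Finset.sum_comm
      _ = ∑ k : Fin n, ∑ l : Fin n, (∑ i, v i k * v i l) ^ 2 := by
          refine Finset.sum_congr rfl fun k _ => Finset.sum_congr rfl fun l _ => ?_
          rw [sq, Finset.sum_mul_sum]
  have diag : ∑ k : Fin n, (∑ i, v i k * v i k) ^ 2
      ≤ ∑ k : Fin n, ∑ l : Fin n, (∑ i, v i k * v i l) ^ 2 :=
    Finset.sum_le_sum fun k _ =>
      Finset.single_le_sum (f := fun l => (∑ i, v i k * v i l) ^ 2)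
        (fun l _ => sq_nonneg _) (Finset.mem_univ k)
  have cs : (∑ k : Fin n, ∑ i, v i k * v i k) ^ 2
      ≤ (n : ℝ) * ∑ k : Fin n, (∑ i, v i k * v i k) ^ 2 := by
    have := sq_sum_le_card_mul_sum_sq (s := (Finset.univ : Finset (Fin n)))
      (f := fun k => ∑ i, v i k * v i k)
    simpa using this
  have hsum : ∑ i, v i ⬝ᵥ v i = ∑ k : Fin n, ∑ i, v i k * v i k := by
    simp only [dotProduct]; rw [Finset.sum_comm]
  rw [key, hsum, div_mul_eq_mul_div, one_mul, div_le_iff₀ (by positivity)]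
  calc (∑ k : Fin n, ∑ i, v i k * v i k) ^ 2
      ≤ (n : ℝ) * ∑ k : Fin n, (∑ i, v i k * v i k) ^ 2 := cs
    _ ≤ (n : ℝ) * ∑ k : Fin n, ∑ l : Fin n, (∑ i, v i k * v i l) ^ 2 :=
        mul_le_mul_of_nonneg_left diag (by positivity)
    _ = (∑ k : Fin n, ∑ l : Fin n, (∑ i, v i k * v i l) ^ 2) * n := by ring
end

section
/- For vectors v_1, ..., v_K in ℝⁿ, not all zero, the equality Σ_{i=1}^K Σ_{j=1}^K ⟨v_j, v_i⟩² = (1/n) (Σ_{i=1}^K ‖v_i‖²)² holds if and only if Σ_{i=1}^K v_i v_iᵀ = a·I_n with a = (1/n) Σ_{i=1}^K ‖v_i‖², i.e., if and only if (v_1,...,v_K) is a tight frame of ℝⁿ. -/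
open Matrix

/-- Frame potential equality characterization: for vectors `v 1, ..., v K` in `ℝⁿ`,
not all zero, the equality `∑ i ∑ j ⟨v j, v i⟩² = (1/n) (∑ i ‖v i‖²)²` holds iff
`∑ i, v i (v i)ᵀ = a • I` with `a = (1/n) ∑ i ‖v i‖²` (tight frame). -/
theorem stmt_3 (n K : ℕ)
    (v : Fin K → Fin n → ℝ) (hv : ∃ i, v i ≠ 0)
    (a : ℝ) (ha : a = (1 / n) * ∑ i, v i ⬝ᵥ v i) :
    (∑ i, ∑ j, (v j ⬝ᵥ v i) ^ 2 = (1 / (n : ℝ)) * (∑ i, v i ⬝ᵥ v i) ^ 2) ↔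
      ∑ i, vecMulVec (v i) (v i) = a • (1 : Matrix (Fin n) (Fin n) ℝ) := by
  obtain ⟨i0, hi0⟩ := hv
  rcases Nat.eq_zero_or_pos n with hn | hn
  · subst hn; exact absurd (funext fun x => x.elim0) hi0
  have hn0 : (n : ℝ) ≠ 0 := Nat.cast_ne_zero.mpr hn.ne'
  set M : Matrix (Fin n) (Fin n) ℝ := ∑ i, vecMulVec (v i) (v i) with hM
  have hMapp : ∀ h k, M h k = ∑ i, v i h * v i k := by
    intro h k
    simp [hM, Matrix.sum_apply, vecMulVec_apply]
  set t : ℝ := ∑ i, v i ⬝ᵥ v i with ht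
  have htrace : ∑ h, M h h = t := by
    simp only [hMapp, ht, dotProduct]
    rw [Finset.sum_comm]
  have swap4 : ∀ (f : Fin K → Fin K → Fin n → Fin n → ℝ),
      ∑ p, ∑ q, ∑ r, ∑ s, f p q r s = ∑ r, ∑ s, ∑ p, ∑ q, f p q r s := by
    intro f
    have h1 : ∀ p, ∑ q, ∑ r, ∑ s, f p q r s = ∑ r, ∑ q, ∑ s, f p q r s :=
      fun p => Finset.sum_comm
    simp_rw [h1]
    rw [Finset.sum_comm]
    refine Finset.sum_congr rfl fun r _ => ?_
    have h2 : ∀ p, ∑ q, ∑ s, f p q r s = ∑ s, ∑ q, f p q r s :=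
      fun p => Finset.sum_comm
    simp_rw [h2]
    exact Finset.sum_comm
  have key1 : ∑ i, ∑ j, (v j ⬝ᵥ v i) ^ 2 = ∑ h, ∑ k, (M h k) ^ 2 := by
    simp only [hMapp, dotProduct, sq, Finset.sum_mul_sum]
    rw [swap4]
    refine Finset.sum_congr rfl fun h _ => Finset.sum_congr rfl fun k _ =>
      Finset.sum_congr rfl fun i _ => Finset.sum_congr rfl fun j _ => by ring
  have key2 : ∑ h, ∑ k, (M h k - a * (1 : Matrix (Fin n) (Fin n) ℝ) h k) ^ 2
      = (∑ h, ∑ k, (M h k) ^ 2) - (2 * a * t - a ^ 2 * n) := by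
    have expand : ∀ h k, (M h k - a * (1 : Matrix (Fin n) (Fin n) ℝ) h k) ^ 2
        = (M h k) ^ 2 - 2 * a * (M h k * (1 : Matrix (Fin n) (Fin n) ℝ) h k)
          + a ^ 2 * ((1 : Matrix (Fin n) (Fin n) ℝ) h k) ^ 2 := fun h k => by ring
    have s1 : ∀ h : Fin n, ∑ k, M h k * (1 : Matrix (Fin n) (Fin n) ℝ) h k = M h h := by
      intro h
      simp [Matrix.one_apply, mul_ite, mul_one, mul_zero]
    have s2 : ∀ h : Fin n, ∑ k, ((1 : Matrix (Fin n) (Fin n) ℝ) h k) ^ 2 = 1 := by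
      intro h
      simp [Matrix.one_apply, apply_ite (· ^ 2)]
    simp_rw [expand, Finset.sum_add_distrib, Finset.sum_sub_distrib, ← Finset.mul_sum,
      s1, s2, htrace]
    simp [Finset.sum_const, Finset.card_univ]
    ring
  have e1 : (∑ h, ∑ k, (M h k) ^ 2 = (1 / (n : ℝ)) * t ^ 2) ↔
      (∑ h, ∑ k, (M h k - a * (1 : Matrix (Fin n) (Fin n) ℝ) h k) ^ 2 = 0) := by
    rw [key2, sub_eq_zero]
    have : 2 * a * t - a ^ 2 * (n : ℝ) = (1 / n) * t ^ 2 := by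
      rw [ha]; field_simp; ring
    rw [this]
  rw [ht, key1, e1]
  constructor
  · intro H
    ext h k
    have h1 := (Finset.sum_eq_zero_iff_of_nonneg
      (fun h _ => Finset.sum_nonneg fun k _ => sq_nonneg _)).mp H h (Finset.mem_univ h)
    have h2 := (Finset.sum_eq_zero_iff_of_nonneg
      (fun k _ => sq_nonneg _)).mp h1 k (Finset.mem_univ k)
    have := (pow_eq_zero_iff two_ne_zero).mp h2
    rw [sub_eq_zero] at this
    simpa [Matrix.smul_apply, smul_eq_mul] using this
  · intro H
    refine Finset.sum_eq_zero fun h _ => Finset.sum_eq_zero fun k _ => ?_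
    rw [H]
    simp [Matrix.smul_apply, smul_eq_mul]
end

section
/- Let α_1 ≥ α_2 ≥ ... ≥ α_K > 0 be a nonincreasing sequence of positive reals (K ≥ n) and let v_1, ..., v_K be vectors in ℝⁿ with ‖v_i‖² = α_i for every i, with frame operator G = Σ_{i=1}^K v_i v_iᵀ. Let λ_1 ≥ λ_2 ≥ ... ≥ λ_n ≥ 0 be the eigenvalues of G in nonincreasing order. Then Σ_{i=1}^m λ_i ≥ Σ_{i=1}^m α_i for every m = 1, ..., n−1, and Σ_{i=1}^n λ_i = Σ_{i=1}^K α_i. -/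
open Matrix

section Aux

lemma aux_card_filter_fin_lt {n m : ℕ} (hm : m ≤ n) :
    (Finset.univ.filter (fun i : Fin n => (i : ℕ) < m)).card = m := by
  rw [Finset.card_filter, Fin.sum_univ_eq_sum_range (fun i => if i < m then 1 else 0),
    ← Finset.card_filter]
  have : (Finset.range n).filter (fun i => i < m) = Finset.range m := by
    ext i; simp; omega
  rw [this, Finset.card_range]

lemma aux_key_comb {n m : ℕ} (hm : m < n) (μ : Fin n → ℝ) (hmono : Antitone μ)
    (hnn : ∀ i, 0 ≤ μ i) (s : Fin n → ℝ) (hs0 : ∀ i, 0 ≤ s i) (hs1 : ∀ i, s i ≤ 1)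
    (hsum : ∑ i, s i ≤ (m : ℝ)) :
    ∑ i, μ i * s i ≤ ∑ i ∈ Finset.univ.filter (fun i : Fin n => (i : ℕ) < m), μ i := by
  set F := Finset.univ.filter (fun i : Fin n => (i : ℕ) < m) with hF
  set c := μ ⟨m, hm⟩ with hc
  have hcard : F.card = m := aux_card_filter_fin_lt hm.le
  have h1 : ∀ i ∈ F, μ i * s i - μ i ≤ c * (s i - 1) := by
    intro i hi
    have him : (i : ℕ) < m := by simpa [hF] using hi
    have hμi : c ≤ μ i := hmono (by simpa [Fin.le_def] using him.le)
    have := mul_le_mul_of_nonpos_right hμi (by linarith [hs1 i] : s i - 1 ≤ 0)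
    nlinarith
  have h2 : ∀ i ∈ Finset.univ.filter (fun i : Fin n => ¬ ((i : ℕ) < m)), μ i * s i ≤ c * s i := by
    intro i hi
    have him : ¬ ((i : ℕ) < m) := by simpa using hi
    have hμi : μ i ≤ c := hmono (by simp [Fin.le_def]; omega)
    exact mul_le_mul_of_nonneg_right hμi (hs0 i)
  have e1 : ∑ i, μ i * s i = ∑ i ∈ F, μ i * s i + ∑ i ∈ Finset.univ.filter (fun i : Fin n => ¬ ((i : ℕ) < m)), μ i * s i :=
    (Finset.sum_filter_add_sum_filter_not _ _ _).symm
  have e2 : ∑ i, s i = ∑ i ∈ F, s i + ∑ i ∈ Finset.univ.filter (fun i : Fin n => ¬ ((i : ℕ) < m)), s i :=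
    (Finset.sum_filter_add_sum_filter_not _ _ _).symm
  have b1 : ∑ i ∈ F, (μ i * s i - μ i) ≤ ∑ i ∈ F, c * (s i - 1) := Finset.sum_le_sum h1
  have b2 : ∑ i ∈ Finset.univ.filter (fun i : Fin n => ¬ ((i : ℕ) < m)), μ i * s i ≤
      ∑ i ∈ Finset.univ.filter (fun i : Fin n => ¬ ((i : ℕ) < m)), c * s i := Finset.sum_le_sum h2
  have e3 : ∑ i ∈ F, (μ i * s i - μ i) = ∑ i ∈ F, μ i * s i - ∑ i ∈ F, μ i := Finset.sum_sub_distrib _ _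
  have e4 : ∑ i ∈ F, c * (s i - 1) = c * (∑ i ∈ F, s i) - c * m := by
    rw [← Finset.mul_sum, Finset.sum_sub_distrib, Finset.sum_const, hcard]
    ring
  have e5 : ∑ i ∈ Finset.univ.filter (fun i : Fin n => ¬ ((i : ℕ) < m)), c * s i =
      c * ∑ i ∈ Finset.univ.filter (fun i : Fin n => ¬ ((i : ℕ) < m)), s i := (Finset.mul_sum _ _ _).symm
  have hc0 : 0 ≤ c := hnn _
  have h6 : c * ((∑ i, s i) - m) ≤ 0 := mul_nonpos_of_nonneg_of_nonpos hc0 (by linarith)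
  nlinarith [b1, b2]

/-- View a plain vector as an element of Euclidean space (reducible). -/
abbrev toE {n : ℕ} (x : Fin n → ℝ) : EuclideanSpace ℝ (Fin n) := WithLp.toLp 2 x

lemma aux_inner_dot {n : ℕ} (x y : EuclideanSpace ℝ (Fin n)) :
    (inner ℝ x y : ℝ) = dotProduct (x : Fin n → ℝ) (y : Fin n → ℝ) := by
  simp [PiLp.inner_apply, dotProduct, RCLike.inner_apply, conj_trivial, mul_comm]

lemma aux_sum_mulVec {n : ℕ} {ι : Type*} (s : Finset ι) (M : ι → Matrix (Fin n) (Fin n) ℝ)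
    (x : Fin n → ℝ) : (∑ j ∈ s, M j) *ᵥ x = ∑ j ∈ s, M j *ᵥ x := by
  ext k
  simp only [mulVec, dotProduct, Finset.sum_apply, Matrix.sum_apply, Finset.sum_mul]
  exact Finset.sum_comm

lemma aux_dotProduct_sum {n : ℕ} {ι : Type*} (s : Finset ι) (x : Fin n → ℝ)
    (f : ι → Fin n → ℝ) : x ⬝ᵥ (∑ j ∈ s, f j) = ∑ j ∈ s, x ⬝ᵥ f j := by
  simp only [dotProduct, Finset.sum_apply, Finset.mul_sum]
  exact Finset.sum_comm

lemma aux_vecMulVec_mulVec {n : ℕ} (a b x : Fin n → ℝ) :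
    vecMulVec a b *ᵥ x = (b ⬝ᵥ x) • a := by
  ext i
  simp [vecMulVec, mulVec, dotProduct, Finset.mul_sum, mul_assoc, mul_comm, mul_left_comm]

lemma aux_parseval {n : ℕ} (b : OrthonormalBasis (Fin n) ℝ (EuclideanSpace ℝ (Fin n)))
    (x : EuclideanSpace ℝ (Fin n)) :
    ∑ i, (inner ℝ (b i) x : ℝ)^2 = (inner ℝ x x : ℝ) := by
  have := b.sum_inner_mul_inner x x
  rw [← this]
  refine Finset.sum_congr rfl fun i _ => ?_
  rw [real_inner_comm x (b i), sq]

end Aux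

/-- Majorization direction of the Schur–Horn-type result: if `‖v i‖² = α i` with
`α` nonincreasing positive (`K ≥ n`) and `μ` is a nonincreasing enumeration of the
eigenvalues of the frame operator `G = ∑ i, v i (v i)ᵀ`, then
`∑_{i<m} μ i ≥ ∑_{i<m} α i` for `m = 1, ..., n-1` and `∑ i, μ i = ∑ i, α i`. -/
theorem stmt_12 (n K : ℕ) (hK : n ≤ K)
    (α : Fin K → ℝ) (hα : ∀ i, 0 < α i) (hαmono : Antitone α)
    (v : Fin K → Fin n → ℝ) (hlen : ∀ i, v i ⬝ᵥ v i = α i)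
    (G : Matrix (Fin n) (Fin n) ℝ)
    (hG : G = ∑ i, vecMulVec (v i) (v i))
    (hHerm : G.IsHermitian)
    (μ : Fin n → ℝ) (hμmono : Antitone μ)
    (hμ : ∃ σ : Equiv.Perm (Fin n), μ = hHerm.eigenvalues ∘ σ) :
    (∀ m : ℕ, 1 ≤ m → m ≤ n - 1 →
      ∑ i ∈ Finset.univ.filter (fun i : Fin K => (i : ℕ) < m), α i ≤
        ∑ i ∈ Finset.univ.filter (fun i : Fin n => (i : ℕ) < m), μ i) ∧
    ∑ i, μ i = ∑ i, α i := by
  obtain ⟨σ, hσ⟩ := hμ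
  set u : OrthonormalBasis (Fin n) ℝ (EuclideanSpace ℝ (Fin n)) := hHerm.eigenvectorBasis with hu
  set lam : Fin n → ℝ := hHerm.eigenvalues with hlamdef
  have htG : Gᵀ = G := by rw [← Matrix.conjTranspose_eq_transpose_of_trivial]; exact hHerm.eq
  -- quadratic form via frame vectors
  have hquad : ∀ x : Fin n → ℝ, x ⬝ᵥ (G *ᵥ x) = ∑ j, (v j ⬝ᵥ x)^2 := by
    intro x
    rw [hG, aux_sum_mulVec, aux_dotProduct_sum]
    refine Finset.sum_congr rfl fun j _ => ?_
    rw [aux_vecMulVec_mulVec, dotProduct_smul, smul_eq_mul, dotProduct_comm, sq]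
  -- symmetry of the bilinear form
  have hsymdot : ∀ x y : Fin n → ℝ, x ⬝ᵥ (G *ᵥ y) = (G *ᵥ x) ⬝ᵥ y := by
    intro x y
    rw [Matrix.dotProduct_mulVec, ← Matrix.mulVec_transpose, htG]
  -- eigenvector equation, with `u i` seen as a plain function
  have heig : ∀ i : Fin n, G *ᵥ (u i : Fin n → ℝ) = lam i • (u i : Fin n → ℝ) := fun i =>
    hHerm.mulVec_eigenvectorBasis i
  -- dot product of eigenvectors with themselves
  have hdotu : ∀ i : Fin n, dotProduct (u i : Fin n → ℝ) (u i : Fin n → ℝ) = 1 := by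
    intro i
    have h := aux_inner_dot (u i) (u i)
    rw [real_inner_self_eq_norm_sq, u.orthonormal.1 i] at h
    rw [← h]; norm_num
  -- quadratic form in the eigenbasis
  have hquadE : ∀ x : EuclideanSpace ℝ (Fin n),
      dotProduct (x : Fin n → ℝ) (G *ᵥ (x : Fin n → ℝ)) = ∑ i, lam i * (inner ℝ (u i) x : ℝ)^2 := by
    intro x
    have h0 := u.sum_inner_mul_inner x (toE (G *ᵥ x))
    have h1 := aux_inner_dot x (toE (G *ᵥ x))
    rw [← h1, ← h0]
    refine Finset.sum_congr rfl fun i _ => ?_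
    have h2 := aux_inner_dot (u i) (toE (G *ᵥ x))
    rw [hsymdot, heig i, smul_dotProduct, smul_eq_mul, ← aux_inner_dot (u i) x] at h2
    rw [h2, real_inner_comm x (u i)]
    ring
  -- eigenvalue = quadratic form at eigenvector
  have hlam_eq : ∀ i : Fin n, lam i = dotProduct (u i : Fin n → ℝ) (G *ᵥ (u i : Fin n → ℝ)) := by
    intro i
    rw [heig i, dotProduct_smul, smul_eq_mul, hdotu i, mul_one]
  -- Parseval through the eigenbasis, in dot-product form
  have hpars : ∀ x : EuclideanSpace ℝ (Fin n),
      ∑ i, (inner ℝ (u i) x : ℝ)^2 = dotProduct (x : Fin n → ℝ) (x : Fin n → ℝ) := by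
    intro x
    rw [aux_parseval u x, aux_inner_dot]
  constructor
  · -- majorization inequalities
    intro m hm1 hm2
    have hmn : m < n := by omega
    have hmK : m ≤ K := by omega
    -- subspace spanned by the first m frame vectors
    set g : Fin m → EuclideanSpace ℝ (Fin n) :=
      (fun l => toE (v (Fin.castLE hmK l))) with hg
    set W : Submodule ℝ (EuclideanSpace ℝ (Fin n)) := Submodule.span ℝ (Set.range g) with hW
    have hrle : Module.finrank ℝ W ≤ m := by
      have := finrank_range_le_card (R := ℝ) g
      simpa [Set.finrank, hW] using this
    set w : OrthonormalBasis (Fin (Module.finrank ℝ W)) ℝ W := stdOrthonormalBasis ℝ W with hw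
    set wE : Fin (Module.finrank ℝ W) → EuclideanSpace ℝ (Fin n) :=
      (fun l => ((w l : W) : EuclideanSpace ℝ (Fin n))) with hwE
    have hwO : Orthonormal ℝ wE := w.orthonormal.comp_linearIsometry W.subtypeₗᵢ
    -- the weights
    set t : Fin n → ℝ := (fun i => ∑ l, (inner ℝ (u i) (wE l) : ℝ)^2) with ht
    have ht0 : ∀ i, 0 ≤ t i := fun i => Finset.sum_nonneg fun l _ => sq_nonneg _
    have ht1 : ∀ i, t i ≤ 1 := by
      intro i
      have hb := hwO.sum_inner_products_le (s := Finset.univ) (u i)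
      have heq : ∑ l, (inner ℝ (u i) (wE l) : ℝ)^2 = ∑ l, ‖(inner ℝ (wE l) (u i) : ℝ)‖^2 := by
        refine Finset.sum_congr rfl fun l _ => ?_
        rw [real_inner_comm (u i) (wE l), Real.norm_eq_abs, sq_abs]
      rw [ht]
      simp only [heq]
      calc ∑ l, ‖(inner ℝ (wE l) (u i) : ℝ)‖^2 ≤ ‖u i‖^2 := hb
        _ = 1 := by rw [u.orthonormal.1 i]; norm_num
    have htsum : ∑ i, t i ≤ (m : ℝ) := by
      have hswap : ∑ i, t i = ∑ l, ∑ i, (inner ℝ (u i) (wE l) : ℝ)^2 := Finset.sum_comm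
      have hone : ∀ l, ∑ i, (inner ℝ (u i) (wE l) : ℝ)^2 = 1 := by
        intro l
        rw [hpars (wE l), ← aux_inner_dot (wE l) (wE l), real_inner_self_eq_norm_sq, hwO.1 l]
        norm_num
      rw [hswap]
      simp only [hone, Finset.sum_const, Finset.card_univ, Fintype.card_fin, nsmul_eq_mul, mul_one]
      exact_mod_cast hrle
    -- Parseval in W for the first m frame vectors
    have hParsW : ∀ j : Fin K, (j : ℕ) < m →
        α j = ∑ l, (inner ℝ (wE l) (toE (v j)) : ℝ)^2 := by
      intro j hj
      have hmem : (toE (v j)) ∈ W := by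
        apply Submodule.subset_span
        refine ⟨⟨(j : ℕ), hj⟩, ?_⟩
        show toE (v (Fin.castLE hmK ⟨(j : ℕ), hj⟩)) = toE (v j)
        have : Fin.castLE hmK ⟨(j : ℕ), hj⟩ = j := Fin.ext rfl
        rw [this]
      set y : W := ⟨(toE (v j)), hmem⟩ with hy
      have h0 := w.sum_inner_mul_inner y y
      have h1 : ∀ l, (inner ℝ y (w l) : ℝ) * (inner ℝ (w l) y : ℝ)
          = (inner ℝ (wE l) (toE (v j)) : ℝ)^2 := by
        intro l
        have ha : (inner ℝ (w l) y : ℝ) = (inner ℝ (wE l) (toE (v j)) : ℝ) :=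
          Submodule.coe_inner W (w l) y
        have ha2 : (inner ℝ y (w l) : ℝ) = (inner ℝ (wE l) (toE (v j)) : ℝ) := by
          rw [real_inner_comm]; exact ha
        rw [ha2, ha, sq]
      have h2 : (inner ℝ y y : ℝ) = α j := by
        have hb : (inner ℝ y y : ℝ) = (inner ℝ (toE (v j)) (toE (v j)) : ℝ) :=
          Submodule.coe_inner W y y
        have hc : (inner ℝ (toE (v j)) (toE (v j)) : ℝ) = v j ⬝ᵥ v j :=
          aux_inner_dot (toE (v j)) (toE (v j))
        rw [hb, hc, hlen j]
      calc α j = (inner ℝ y y : ℝ) := h2.symm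
        _ = ∑ l, (inner ℝ y (w l) : ℝ) * (inner ℝ (w l) y : ℝ) := h0.symm
        _ = ∑ l, (inner ℝ (wE l) (toE (v j)) : ℝ)^2 :=
            Finset.sum_congr rfl fun l _ => h1 l
    -- main chain
    have hchain : ∑ j ∈ Finset.univ.filter (fun j : Fin K => (j : ℕ) < m), α j ≤
        ∑ i, lam i * t i := by
      calc ∑ j ∈ Finset.univ.filter (fun j : Fin K => (j : ℕ) < m), α j
          = ∑ j ∈ Finset.univ.filter (fun j : Fin K => (j : ℕ) < m),
              ∑ l, (inner ℝ (wE l) (toE (v j)) : ℝ)^2 := by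
            refine Finset.sum_congr rfl fun j hj => ?_
            exact hParsW j (by simpa using hj)
        _ ≤ ∑ j : Fin K, ∑ l, (inner ℝ (wE l) (toE (v j)) : ℝ)^2 := by
            apply Finset.sum_le_sum_of_subset_of_nonneg (Finset.filter_subset _ _)
            intro j _ _
            exact Finset.sum_nonneg fun l _ => sq_nonneg _
        _ = ∑ l, ∑ j : Fin K, (inner ℝ (wE l) (toE (v j)) : ℝ)^2 :=
            Finset.sum_comm
        _ = ∑ l, dotProduct (wE l : Fin n → ℝ) (G *ᵥ (wE l : Fin n → ℝ)) := by
            refine Finset.sum_congr rfl fun l _ => ?_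
            rw [hquad (wE l)]
            refine Finset.sum_congr rfl fun j _ => ?_
            rw [aux_inner_dot (wE l) (toE (v j)), dotProduct_comm]
        _ = ∑ l, ∑ i, lam i * (inner ℝ (u i) (wE l) : ℝ)^2 := by
            refine Finset.sum_congr rfl fun l _ => ?_
            exact hquadE (wE l)
        _ = ∑ i, lam i * t i := by
            rw [Finset.sum_comm]
            refine Finset.sum_congr rfl fun i _ => ?_
            rw [ht, Finset.mul_sum]
    have hperm : ∑ i, lam i * t i = ∑ i, μ i * t (σ i) := by
      rw [hσ]
      exact (Equiv.sum_comp σ (fun i => lam i * t i)).symm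
    have hPSD : G.PosSemidef := by
      refine Matrix.PosSemidef.of_dotProduct_mulVec_nonneg hHerm fun x => ?_
      have hx : star x ⬝ᵥ (G *ᵥ x) = ∑ j, (v j ⬝ᵥ x)^2 := by
        simpa using hquad x
      rw [hx]
      exact Finset.sum_nonneg fun j _ => sq_nonneg _
    have hμnn : ∀ i, 0 ≤ μ i := by
      intro i
      rw [hσ]
      exact hPSD.eigenvalues_nonneg (σ i)
    have hfinal := aux_key_comb hmn μ hμmono hμnn (fun i => t (σ i))
      (fun i => ht0 _) (fun i => ht1 _)
      (by rw [Equiv.sum_comp σ t]; exact htsum)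
    calc ∑ j ∈ Finset.univ.filter (fun j : Fin K => (j : ℕ) < m), α j
        ≤ ∑ i, lam i * t i := hchain
      _ = ∑ i, μ i * t (σ i) := hperm
      _ ≤ ∑ i ∈ Finset.univ.filter (fun i : Fin n => (i : ℕ) < m), μ i := hfinal
  · -- trace identity
    have h1 : ∑ i, μ i = ∑ i, lam i := by
      rw [hσ]
      exact Equiv.sum_comp σ lam
    have h3 : ∑ i, lam i = ∑ j, ∑ i : Fin n, (v j ⬝ᵥ (u i : Fin n → ℝ))^2 := by
      rw [← Finset.sum_comm]
      refine Finset.sum_congr rfl fun i _ => ?_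
      rw [hlam_eq i, hquad]
    have h4 : ∀ j, ∑ i : Fin n, (v j ⬝ᵥ (u i : Fin n → ℝ))^2 = α j := by
      intro j
      have heq : ∀ i : Fin n, (v j ⬝ᵥ (u i : Fin n → ℝ))^2
          = (inner ℝ (u i) (toE (v j)) : ℝ)^2 := by
        intro i
        rw [aux_inner_dot (u i) (toE (v j)), dotProduct_comm]
      simp only [heq]
      rw [hpars (toE (v j))]
      exact hlen j
    rw [h1, h3]
    exact Finset.sum_congr rfl fun j _ => h4 j
end

section
/- Let α_1 ≥ α_2 ≥ ... ≥ α_K > 0 be a nonincreasing sequence of positive reals with K ≥ n, and let G be an n×n real symmetric positive definite matrix whose nonincreasing eigenvalues λ_1 ≥ ... ≥ λ_n satisfy Σ_{i=1}^m λ_i ≥ Σ_{i=1}^m α_i for every m = 1, ..., n−1 and Σ_{i=1}^n λ_i = Σ_{i=1}^K α_i. Then there exist vectors v_1, ..., v_K in ℝⁿ such that G = Σ_{i=1}^K v_i v_iᵀ and ‖v_i‖² = α_i for every i = 1, ..., K. -/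
open Matrix

set_option maxHeartbeats 1000000

/-- Sum over a finset of an updated function. -/
lemma sum_upd_aux {ι M : Type*} [DecidableEq ι] [AddCommGroup M]
    (F : Finset ι) (f : ι → M) (a : ι) (v : M) :
    ∑ i ∈ F, Function.update f a v i = ∑ i ∈ F, f i + (if a ∈ F then v - f a else 0) := by
  by_cases h : a ∈ F
  · rw [Finset.sum_update_of_mem h, if_pos h, Finset.sum_eq_sum_sdiff_singleton_add h f]
    abel
  · rw [Finset.sum_update_of_notMem h, if_neg h, add_zero]

/-- Rotation lemma: a rotation in the plane of two vectors preserves the sum of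
rank-one matrices and can realize any intermediate squared norm. -/
lemma rot_aux {n : ℕ} (x y : Fin n → ℝ) (c : ℝ)
    (hc : c ∈ Set.uIcc (x ⬝ᵥ x) (y ⬝ᵥ y)) :
    ∃ u w : Fin n → ℝ,
      vecMulVec u u + vecMulVec w w = vecMulVec x x + vecMulVec y y ∧
      u ⬝ᵥ u = c ∧ w ⬝ᵥ w = x ⬝ᵥ x + y ⬝ᵥ y - c := by
  set f : ℝ → ℝ := fun θ =>
    Real.cos θ ^ 2 * (x ⬝ᵥ x) + 2 * Real.cos θ * Real.sin θ * (x ⬝ᵥ y)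
      + Real.sin θ ^ 2 * (y ⬝ᵥ y) with hf
  have hcont : ContinuousOn f (Set.uIcc 0 (Real.pi / 2)) := by fun_prop
  have hf0 : f 0 = x ⬝ᵥ x := by simp [hf]
  have hfp : f (Real.pi / 2) = y ⬝ᵥ y := by simp [hf]
  have hIV := intermediate_value_uIcc hcont
  rw [hf0, hfp] at hIV
  obtain ⟨θ, -, hθ⟩ := hIV hc
  set co := Real.cos θ with hco
  set si := Real.sin θ with hsi
  have pyth : co ^ 2 + si ^ 2 = 1 := by
    simpa [co, si] using Real.cos_sq_add_sin_sq θ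
  refine ⟨co • x + si • y, (-si) • x + co • y, ?_, ?_, ?_⟩
  · ext r s
    simp only [Matrix.add_apply, vecMulVec_apply, Pi.add_apply, Pi.smul_apply, smul_eq_mul,
      Pi.neg_apply]
    linear_combination (x r * x s + y r * y s) * pyth
  · have : (co • x + si • y) ⬝ᵥ (co • x + si • y) = f θ := by
      simp only [dotProduct_add, add_dotProduct, smul_dotProduct, dotProduct_smul,
        smul_eq_mul, hf, dotProduct_comm y x]
      ring
    rw [this, hθ]
  · have h1 : ((-si) • x + co • y) ⬝ᵥ ((-si) • x + co • y)
        = si ^ 2 * (x ⬝ᵥ x) - 2 * co * si * (x ⬝ᵥ y) + co ^ 2 * (y ⬝ᵥ y) := by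
      simp only [dotProduct_add, add_dotProduct, smul_dotProduct, dotProduct_smul,
        smul_eq_mul, dotProduct_comm y x]
      ring
    have h2 : f θ = c := hθ
    rw [h1]
    simp only [hf, ← hco, ← hsi] at h2
    linear_combination -h2 + (x ⬝ᵥ x + y ⬝ᵥ y) * pyth

/-- Main induction: redistribute squared norms along a majorization chain. -/
lemma lemA_aux {n K : ℕ} (α : Fin K → ℝ) (hαmono : Antitone α) :
    ∀ N : ℕ, ∀ b : Fin K → ℝ, ∀ v : Fin K → Fin n → ℝ,
    (Finset.univ.filter fun i => b i ≠ α i).card ≤ N →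
    (∀ i, v i ⬝ᵥ v i = b i) →
    (∀ m : ℕ, ∑ i ∈ Finset.univ.filter (fun i : Fin K => (i : ℕ) < m), α i ≤
        ∑ i ∈ Finset.univ.filter (fun i : Fin K => (i : ℕ) < m), b i) →
    (∑ i, b i = ∑ i, α i) →
    ∃ u : Fin K → Fin n → ℝ,
      (∑ i, vecMulVec (u i) (u i)) = (∑ i, vecMulVec (v i) (v i)) ∧
      ∀ i, u i ⬝ᵥ u i = α i := by
  intro N
  induction N with
  | zero =>
    intro b v hcard hv _ _
    have hempty : (Finset.univ.filter fun i => b i ≠ α i) = ∅ :=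
      Finset.card_eq_zero.mp (Nat.le_zero.mp hcard)
    have hba : ∀ i, b i = α i := by
      intro i
      by_contra h
      exact absurd hempty (Finset.ne_empty_of_mem
        (Finset.mem_filter.mpr ⟨Finset.mem_univ i, h⟩))
    exact ⟨v, rfl, fun i => (hv i).trans (hba i)⟩
  | succ N IH =>
    intro b v hcard hv hmaj hsum
    by_cases hba : ∀ i, b i = α i
    · exact ⟨v, rfl, fun i => (hv i).trans (hba i)⟩
    -- choose k : minimal index with b k < α k
    have hSk : (Finset.univ.filter fun i => b i < α i).Nonempty := by
      by_contra h
      rw [Finset.not_nonempty_iff_eq_empty, Finset.filter_eq_empty_iff] at h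
      push_neg at hba
      obtain ⟨i0, hi0⟩ := hba
      have hlt : ∑ i, α i < ∑ i, b i :=
        Finset.sum_lt_sum (fun i _ => not_lt.mp (h (Finset.mem_univ i)))
          ⟨i0, Finset.mem_univ i0,
            lt_of_le_of_ne (not_lt.mp (h (Finset.mem_univ i0))) (Ne.symm hi0)⟩
      linarith
    obtain ⟨k, hkmem, hkle⟩ :=
      Finset.exists_min_image (Finset.univ.filter fun i => b i < α i) id hSk
    have hk : b k < α k := (Finset.mem_filter.mp hkmem).2
    have hkmin : ∀ i : Fin K, i < k → α i ≤ b i := by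
      intro i hik
      by_contra h
      exact absurd (hkle i (Finset.mem_filter.mpr ⟨Finset.mem_univ i, not_le.mp h⟩))
        (not_le.mpr hik)
    -- choose j < k with α j < b j
    have hSj : ∃ j : Fin K, j < k ∧ α j < b j := by
      by_contra h
      push_neg at h
      have hkk : k ∈ Finset.univ.filter (fun i : Fin K => (i : ℕ) < (k : ℕ) + 1) :=
        Finset.mem_filter.mpr ⟨Finset.mem_univ k, Nat.lt_succ_self _⟩
      have hlt : ∑ i ∈ Finset.univ.filter (fun i : Fin K => (i : ℕ) < (k : ℕ) + 1), b i <
          ∑ i ∈ Finset.univ.filter (fun i : Fin K => (i : ℕ) < (k : ℕ) + 1), α i := by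
        refine Finset.sum_lt_sum (fun i hi => ?_) ⟨k, hkk, hk⟩
        rcases eq_or_ne i k with rfl | hik
        · exact hk.le
        · have him : (i : ℕ) < (k : ℕ) + 1 := (Finset.mem_filter.mp hi).2
          have hik' : i < k := by
            have hne : (i : ℕ) ≠ (k : ℕ) := fun hh => hik (Fin.ext hh)
            rw [Fin.lt_def]
            omega
          exact h i hik'
      linarith [hmaj ((k : ℕ) + 1)]
    obtain ⟨j, hjk, hjb⟩ := hSj
    have hjk' : j ≠ k := ne_of_lt hjk
    set δ := min (b j - α j) (α k - b k) with hδdef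
    have hδ1 : δ ≤ b j - α j := min_le_left _ _
    have hδ2 : δ ≤ α k - b k := min_le_right _ _
    have hδpos : 0 < δ := lt_min (by linarith) (by linarith)
    have hαjk : α k ≤ α j := hαmono hjk.le
    -- rotation
    have hcmem : b j - δ ∈ Set.uIcc ((v j) ⬝ᵥ (v j)) ((v k) ⬝ᵥ (v k)) := by
      rw [hv j, hv k, Set.mem_uIcc]
      right
      constructor <;> linarith
    obtain ⟨u1, w1, hrotsum, hu1, hw1⟩ := rot_aux (v j) (v k) (b j - δ) hcmem
    rw [hv j, hv k] at hw1
    set b' := Function.update (Function.update b j (b j - δ)) k (b k + δ) with hb'def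
    set v' := Function.update (Function.update v j u1) k w1 with hv'def
    have hb'j : b' j = b j - δ := by
      rw [hb'def, Function.update_of_ne hjk', Function.update_self]
    have hb'k : b' k = b k + δ := by rw [hb'def, Function.update_self]
    have hb'o : ∀ i, i ≠ j → i ≠ k → b' i = b i := by
      intro i h1 h2
      rw [hb'def, Function.update_of_ne h2, Function.update_of_ne h1]
    have hv'j : v' j = u1 := by
      rw [hv'def, Function.update_of_ne hjk', Function.update_self]
    have hv'k : v' k = w1 := by rw [hv'def, Function.update_self]
    have hv'o : ∀ i, i ≠ j → i ≠ k → v' i = v i := by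
      intro i h1 h2
      rw [hv'def, Function.update_of_ne h2, Function.update_of_ne h1]
    -- norms of new vectors
    have hv' : ∀ i, v' i ⬝ᵥ v' i = b' i := by
      intro i
      rcases eq_or_ne i j with rfl | h1
      · rw [hv'j, hb'j]; exact hu1
      rcases eq_or_ne i k with rfl | h2
      · rw [hv'k, hb'k, hw1]; ring
      · rw [hv'o i h1 h2, hb'o i h1 h2]; exact hv i
    -- sums of b' over any finset
    have hb'sum : ∀ F : Finset (Fin K), ∑ i ∈ F, b' i =
        ∑ i ∈ F, b i + (if j ∈ F then -δ else 0) + (if k ∈ F then δ else 0) := by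
      intro F
      rw [hb'def, sum_upd_aux F _ k (b k + δ), sum_upd_aux F b j (b j - δ),
        Function.update_of_ne (Ne.symm hjk')]
      congr 1
      · congr 1
        split <;> ring
      · split <;> ring
    -- majorization for b'
    have hmaj' : ∀ m : ℕ, ∑ i ∈ Finset.univ.filter (fun i : Fin K => (i : ℕ) < m), α i ≤
        ∑ i ∈ Finset.univ.filter (fun i : Fin K => (i : ℕ) < m), b' i := by
      intro m
      set F := Finset.univ.filter (fun i : Fin K => (i : ℕ) < m) with hF
      rw [hb'sum F]
      by_cases hkF : k ∈ F
      · have hjF : j ∈ F := by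
          rw [hF, Finset.mem_filter]
          refine ⟨Finset.mem_univ _, ?_⟩
          have : (k : ℕ) < m := (Finset.mem_filter.mp hkF).2
          have : (j : ℕ) < (k : ℕ) := hjk
          omega
        rw [if_pos hjF, if_pos hkF]
        have := hmaj m
        linarith
      · by_cases hjF : j ∈ F
        · rw [if_pos hjF, if_neg hkF]
          have hdel : δ ≤ ∑ i ∈ F, (b i - α i) := by
            rw [← Finset.add_sum_erase F _ hjF]
            have h0 : (0:ℝ) ≤ ∑ i ∈ F.erase j, (b i - α i) := by
              refine Finset.sum_nonneg fun i hi => ?_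
              have him : (i : ℕ) < m := (Finset.mem_filter.mp (Finset.mem_of_mem_erase hi)).2
              have hmk : ¬ ((k : ℕ) < m) := fun h => hkF (Finset.mem_filter.mpr ⟨Finset.mem_univ _, h⟩)
              have hik : i < k := by rw [Fin.lt_def]; omega
              linarith [hkmin i hik]
            linarith
          rw [Finset.sum_sub_distrib] at hdel
          linarith
        · rw [if_neg hjF, if_neg hkF]
          have := hmaj m
          linarith
    -- total sum for b'
    have hsum' : ∑ i, b' i = ∑ i, α i := by
      rw [show (Finset.univ : Finset (Fin K)) = Finset.univ from rfl]
      rw [hb'sum Finset.univ, if_pos (Finset.mem_univ j), if_pos (Finset.mem_univ k)]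
      rw [hsum]; ring
    -- cardinality decreases
    have hcard' : (Finset.univ.filter fun i => b' i ≠ α i).card ≤ N := by
      have hsub : (Finset.univ.filter fun i => b' i ≠ α i) ⊆
          (Finset.univ.filter fun i => b i ≠ α i) := by
        intro i hi
        have hi' := (Finset.mem_filter.mp hi).2
        refine Finset.mem_filter.mpr ⟨Finset.mem_univ _, ?_⟩
        rcases eq_or_ne i j with rfl | h1
        · exact ne_of_gt hjb
        rcases eq_or_ne i k with rfl | h2
        · exact ne_of_lt hk
        · rwa [hb'o i h1 h2] at hi'
      have hex : ∃ i, i ∈ (Finset.univ.filter fun i => b i ≠ α i) ∧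
          i ∉ (Finset.univ.filter fun i => b' i ≠ α i) := by
        rcases min_cases (b j - α j) (α k - b k) with ⟨hmin, _⟩ | ⟨hmin, _⟩
        · refine ⟨j, Finset.mem_filter.mpr ⟨Finset.mem_univ _, ne_of_gt hjb⟩, ?_⟩
          rw [Finset.mem_filter]
          push_neg
          intro _
          rw [hb'j, hδdef, hmin]; ring
        · refine ⟨k, Finset.mem_filter.mpr ⟨Finset.mem_univ _, ne_of_lt hk⟩, ?_⟩
          rw [Finset.mem_filter]
          push_neg
          intro _
          rw [hb'k, hδdef, hmin]; ring
      obtain ⟨i0, hi0m, hi0n⟩ := hex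
      have hss : (Finset.univ.filter fun i => b' i ≠ α i) ⊂
          (Finset.univ.filter fun i => b i ≠ α i) :=
        ⟨hsub, fun hsup => hi0n (hsup hi0m)⟩
      have := Finset.card_lt_card hss
      omega
    -- frame operator preserved
    have hvsum : ∑ i, vecMulVec (v' i) (v' i) = ∑ i, vecMulVec (v i) (v i) := by
      have hfun : (fun i => vecMulVec (v' i) (v' i)) =
          Function.update (Function.update (fun i => vecMulVec (v i) (v i)) j
            (vecMulVec u1 u1)) k (vecMulVec w1 w1) := by
        funext i
        rcases eq_or_ne i k with rfl | h2
        · rw [hv'k, Function.update_self]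
        rcases eq_or_ne i j with rfl | h1
        · rw [hv'j, Function.update_of_ne h2, Function.update_self]
        · rw [hv'o i h1 h2, Function.update_of_ne h2, Function.update_of_ne h1]
      calc ∑ i, vecMulVec (v' i) (v' i)
          = ∑ i, Function.update (Function.update (fun i => vecMulVec (v i) (v i)) j
            (vecMulVec u1 u1)) k (vecMulVec w1 w1) i := by rw [← hfun]
        _ = ∑ i, vecMulVec (v i) (v i) := by
            rw [sum_upd_aux Finset.univ _ k _, sum_upd_aux Finset.univ _ j _,
              if_pos (Finset.mem_univ j), if_pos (Finset.mem_univ k),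
              Function.update_of_ne (Ne.symm hjk')]
            have hzero : vecMulVec u1 u1 - vecMulVec (v j) (v j) +
                (vecMulVec w1 w1 - vecMulVec (v k) (v k)) = 0 := by
              rw [sub_add_sub_comm, hrotsum, sub_self]
            rw [add_assoc, hzero, add_zero]
    obtain ⟨u, hueq, huα⟩ := IH b' v' hcard' hv' hmaj' hsum'
    exact ⟨u, hueq.trans hvsum, huα⟩

lemma sum_extend_aux {M : Type*} [AddCommMonoid M] {n K : ℕ} (hK : n ≤ K) (f : ℕ → M)
    (hf : ∀ i, n ≤ i → f i = 0) :
    ∑ i : Fin K, f (i : ℕ) = ∑ j : Fin n, f (j : ℕ) := by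
  rw [Fin.sum_univ_eq_sum_range f K, Fin.sum_univ_eq_sum_range f n]
  exact (Finset.sum_subset (Finset.range_subset_range.mpr hK)
    (fun i _ hi => hf i (by simpa using hi))).symm

lemma filter_sum_aux {K : ℕ} (m : ℕ) (f : ℕ → ℝ) :
    ∑ i ∈ Finset.univ.filter (fun i : Fin K => (i : ℕ) < m), f (i : ℕ) =
      ∑ i ∈ Finset.range (min m K), f i := by
  rw [Finset.sum_filter, Fin.sum_univ_eq_sum_range (fun i => if i < m then f i else 0) K]
  rw [← Finset.sum_subset (s₁ := Finset.range (min m K)) (Finset.range_subset_range.mpr (min_le_right _ _))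
    (fun i hi hni => by
      rw [if_neg]
      simp only [Finset.mem_range] at hi hni
      omega)]
  refine Finset.sum_congr rfl fun i hi => ?_
  rw [if_pos]
  simp only [Finset.mem_range] at hi
  omega

lemma vecMulVec_smul_aux {n : ℕ} (c : ℝ) (x : Fin n → ℝ) :
    vecMulVec (c • x) (c • x) = (c * c) • vecMulVec x x := by
  ext r s
  simp [vecMulVec_apply]
  ring

/-- Existence direction of the Schur–Horn-type result: if `α` is a nonincreasing
positive sequence (`K ≥ n`) and `G` is symmetric positive definite whose
nonincreasing eigenvalues `μ` majorize `α` (partial sums dominate and total sums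
agree), then there exist vectors `v i` with `G = ∑ i, v i (v i)ᵀ` and
`‖v i‖² = α i` for every `i`. -/
theorem stmt_13 (n K : ℕ) (hK : n ≤ K)
    (α : Fin K → ℝ) (hα : ∀ i, 0 < α i) (hαmono : Antitone α)
    (G : Matrix (Fin n) (Fin n) ℝ) (hG : G.PosDef)
    (μ : Fin n → ℝ) (hμmono : Antitone μ)
    (hμ : ∃ σ : Equiv.Perm (Fin n), μ = hG.isHermitian.eigenvalues ∘ σ)
    (hmaj : ∀ m : ℕ, 1 ≤ m → m ≤ n - 1 →
      ∑ i ∈ Finset.univ.filter (fun i : Fin K => (i : ℕ) < m), α i ≤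
        ∑ i ∈ Finset.univ.filter (fun i : Fin n => (i : ℕ) < m), μ i)
    (hsum : ∑ i, μ i = ∑ i, α i) :
    ∃ v : Fin K → Fin n → ℝ,
      G = ∑ i, vecMulVec (v i) (v i) ∧ ∀ i, v i ⬝ᵥ v i = α i := by

  classical
  obtain ⟨σ, hσ⟩ := hμ
  set hH := hG.isHermitian with hHdef
  set U : Matrix (Fin n) (Fin n) ℝ :=
    (Matrix.IsHermitian.eigenvectorUnitary hH : Matrix (Fin n) (Fin n) ℝ) with hUdef
  -- columns of U have unit norm
  have hunit : star U * U = 1 :=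
    Matrix.mem_unitaryGroup_iff'.mp (Matrix.IsHermitian.eigenvectorUnitary hH).2
  have hcol : ∀ t : Fin n, (fun r => U r t) ⬝ᵥ (fun r => U r t) = 1 := by
    intro t
    have := congrArg (fun M => M t t) hunit
    simp only [Matrix.mul_apply, Matrix.one_apply_eq, Matrix.star_apply, star_trivial] at this
    simpa [dotProduct] using this
  -- spectral decomposition as a sum of rank-one matrices
  have hdec : G = ∑ t : Fin n, hH.eigenvalues t •
      vecMulVec (fun r => U r t) (fun r => U r t) := by
    ext r s
    conv_lhs => rw [hH.spectral_theorem]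
    simp only [Unitary.conjStarAlgAut_apply, Matrix.mul_apply, Matrix.diagonal_apply, Matrix.sum_apply, Matrix.smul_apply,
      Matrix.vecMulVec_apply, Matrix.star_apply, star_trivial, Function.comp_apply,
      smul_eq_mul, mul_ite, ite_mul, mul_zero, zero_mul, Finset.sum_ite_eq,
      Finset.sum_ite_eq', Finset.mem_univ, if_true]
    refine Finset.sum_congr rfl fun t _ => ?_
    have hco : (RCLike.ofReal (hH.eigenvalues t) : ℝ) = hH.eigenvalues t := rfl
    rw [hco]
    ring
  have hμpos : ∀ t, 0 < μ t := by
    intro t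
    rw [hσ]
    exact hG.eigenvalues_pos (σ t)
  have hdecσ : G = ∑ t : Fin n, μ t •
      vecMulVec (fun r => U r (σ t)) (fun r => U r (σ t)) := by
    rw [hσ]
    calc G = ∑ t : Fin n, hH.eigenvalues t • vecMulVec (fun r => U r t) (fun r => U r t) :=
        hdec
      _ = _ := (Equiv.sum_comp σ (fun t => hH.eigenvalues t •
          vecMulVec (fun r => U r t) (fun r => U r t))).symm
  -- the initial system of vectors
  set μ' : ℕ → ℝ := fun i => if h : i < n then μ ⟨i, h⟩ else 0 with hμ'def
  set v : Fin K → Fin n → ℝ := fun i =>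
    if h : (i : ℕ) < n then Real.sqrt (μ ⟨i, h⟩) • (fun r => U r (σ ⟨i, h⟩)) else 0 with hvdef
  set b : Fin K → ℝ := fun i => μ' (i : ℕ) with hbdef
  have hμ'fin : ∀ j : Fin n, μ' (j : ℕ) = μ j := by
    intro j
    simp only [hμ'def, dif_pos j.isLt, Fin.eta]
  have hb : ∀ i, v i ⬝ᵥ v i = b i := by
    intro i
    by_cases h : (i : ℕ) < n
    · simp only [hvdef, hbdef, hμ'def, dif_pos h, smul_dotProduct, dotProduct_smul,
        smul_eq_mul, hcol]
      rw [mul_one, Real.mul_self_sqrt (hμpos _).le]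
    · simp only [hvdef, hbdef, hμ'def, dif_neg h, zero_dotProduct]
  have hGv : ∑ i : Fin K, vecMulVec (v i) (v i) = G := by
    set g : ℕ → Matrix (Fin n) (Fin n) ℝ := fun t =>
      if h : t < n then μ ⟨t, h⟩ •
        vecMulVec (fun r => U r (σ ⟨t, h⟩)) (fun r => U r (σ ⟨t, h⟩)) else 0 with hgdef
    have hterm : ∀ i : Fin K, vecMulVec (v i) (v i) = g (i : ℕ) := by
      intro i
      by_cases h : (i : ℕ) < n
      · simp only [hvdef, hgdef, dif_pos h]
        rw [vecMulVec_smul_aux, Real.mul_self_sqrt (hμpos _).le]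
      · simp only [hvdef, hgdef, dif_neg h]
        ext r s
        simp [vecMulVec_apply]
    have hg0 : ∀ i, n ≤ i → g i = 0 := fun i hi => dif_neg (not_lt.mpr hi)
    rw [Finset.sum_congr rfl (fun i _ => hterm i), sum_extend_aux hK g hg0, hdecσ]
    refine Finset.sum_congr rfl fun j _ => ?_
    simp only [hgdef, dif_pos j.isLt, Fin.eta]
  -- majorization hypothesis for lemA_aux
  have hmajA : ∀ m : ℕ, ∑ i ∈ Finset.univ.filter (fun i : Fin K => (i : ℕ) < m), α i ≤
      ∑ i ∈ Finset.univ.filter (fun i : Fin K => (i : ℕ) < m), b i := by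
    intro m
    have hbs : ∑ i ∈ Finset.univ.filter (fun i : Fin K => (i : ℕ) < m), b i =
        ∑ i ∈ Finset.range (min m K), μ' i := filter_sum_aux m μ'
    by_cases hm0 : m = 0
    · subst hm0
      simp
    by_cases hmn : m < n
    · have h1 : 1 ≤ m := Nat.one_le_iff_ne_zero.mpr hm0
      have h2 : m ≤ n - 1 := by omega
      refine le_trans (hmaj m h1 h2) ?_
      have hμs : ∑ i ∈ Finset.univ.filter (fun i : Fin n => (i : ℕ) < m), μ i =
          ∑ i ∈ Finset.range (min m n), μ' i := by
        rw [← filter_sum_aux m μ']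
        exact Finset.sum_congr rfl fun i _ => (hμ'fin i).symm
      rw [hμs, hbs]
      have : min m n = min m K := by omega
      rw [this]
    · -- m ≥ n
      have hnm : n ≤ m := not_lt.mp hmn
      have hstep1 : ∑ i ∈ Finset.univ.filter (fun i : Fin K => (i : ℕ) < m), α i ≤
          ∑ i, α i :=
        Finset.sum_le_sum_of_subset_of_nonneg (Finset.filter_subset _ _)
          (fun i _ _ => (hα i).le)
      have hstep2 : ∑ i, α i = ∑ i ∈ Finset.range (min m K), μ' i := by
        rw [← hsum]
        have : ∑ i, μ i = ∑ i ∈ Finset.range n, μ' i := by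
          rw [← Fin.sum_univ_eq_sum_range μ' n]
          exact Finset.sum_congr rfl fun i _ => (hμ'fin i).symm
        rw [this]
        refine Finset.sum_subset (Finset.range_subset_range.mpr (by omega)) fun i _ hi => ?_
        have : ¬ i < n := by
          simp only [Finset.mem_range] at hi ⊢
          omega
        exact dif_neg this
      rw [hbs, ← hstep2]
      exact hstep1
  have hsumA : ∑ i, b i = ∑ i, α i := by
    have : ∑ i : Fin K, b i = ∑ j : Fin n, μ' (j : ℕ) :=
      sum_extend_aux hK μ' (fun i hi => dif_neg (not_lt.mpr hi))
    rw [this, ← hsum]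
    exact Finset.sum_congr rfl fun j _ => hμ'fin j
  obtain ⟨u, hueq, huα⟩ := lemA_aux α hαmono
    ((Finset.univ.filter fun i => b i ≠ α i).card) b v le_rfl hb hmajA hsumA
  exact ⟨u, (hueq.trans hGv).symm, huα⟩
end

section
/- Let n ≥ 2, let A be an n×n real matrix and B an n×m real matrix, and for T ∈ ℕ, T ≥ 1, let W_T = Σ_{t=0}^{T−1} Aᵗ B Bᵀ (Aᵀ)ᵗ be the controllability grammian, assumed nonzero. If trace(W_T²) / (trace(W_T))² < 1/(n−1) for some T, then the pair (A,B) is controllable, i.e., the n×(nm) controllability matrix [B, AB, ..., A^{n−1}B] has rank n. -/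
open Matrix
open Finset

section aux

variable {n m : ℕ}

private lemma trace_conj (U : Matrix.unitaryGroup (Fin n) ℝ) (M : Matrix (Fin n) (Fin n) ℝ) :
    ((U : Matrix (Fin n) (Fin n) ℝ) * M * star (U : Matrix (Fin n) (Fin n) ℝ)).trace = M.trace := by
  rw [trace_mul_comm, ← mul_assoc, Unitary.coe_star_mul_self, one_mul]

private lemma trace_herm {W : Matrix (Fin n) (Fin n) ℝ} (hH : W.IsHermitian) :
    W.trace = ∑ i, hH.eigenvalues i := by
  conv_lhs => rw [hH.spectral_theorem]
  rw [Unitary.conjStarAlgAut_apply]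
  rw [trace_conj]
  simp [trace_diagonal]

private lemma trace_herm_sq {W : Matrix (Fin n) (Fin n) ℝ} (hH : W.IsHermitian) :
    (W * W).trace = ∑ i, hH.eigenvalues i ^ 2 := by
  conv_lhs => rw [hH.spectral_theorem]
  have h1 : ∀ (X Y : Matrix (Fin n) (Fin n) ℝ) (U : Matrix.unitaryGroup (Fin n) ℝ),
      ((U : Matrix (Fin n) (Fin n) ℝ) * X * star (U : Matrix (Fin n) (Fin n) ℝ)) *
        ((U : Matrix (Fin n) (Fin n) ℝ) * Y * star (U : Matrix (Fin n) (Fin n) ℝ)) =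
      (U : Matrix (Fin n) (Fin n) ℝ) * (X * Y) * star (U : Matrix (Fin n) (Fin n) ℝ) := by
    intro X Y U
    have h := Unitary.coe_star_mul_self U
    calc ((U : Matrix (Fin n) (Fin n) ℝ) * X * star (U : Matrix (Fin n) (Fin n) ℝ)) *
        ((U : Matrix (Fin n) (Fin n) ℝ) * Y * star (U : Matrix (Fin n) (Fin n) ℝ))
        = (U : Matrix (Fin n) (Fin n) ℝ) * X *
          ((star (U : Matrix (Fin n) (Fin n) ℝ) * (U : Matrix (Fin n) (Fin n) ℝ)) *
            (Y * star (U : Matrix (Fin n) (Fin n) ℝ))) := by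
          simp only [mul_assoc]
      _ = _ := by rw [h, one_mul]; simp only [mul_assoc]
  rw [Unitary.conjStarAlgAut_apply]
  rw [h1, trace_conj, diagonal_mul_diagonal, trace_diagonal]
  simp [sq]

private lemma my_vecMul_sum {ι : Type*} (s : Finset ι) (v : Fin n → ℝ)
    (M : ι → Matrix (Fin n) (Fin m) ℝ) :
    v ᵥ* (∑ i ∈ s, M i) = ∑ i ∈ s, v ᵥ* M i := by
  ext j
  simp only [Matrix.vecMul, dotProduct, Finset.sum_apply, Matrix.sum_apply,
    Finset.mul_sum]
  rw [Finset.sum_comm]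

private lemma my_smul_vecMul (c : ℝ) (v : Fin n → ℝ) (M : Matrix (Fin n) (Fin m) ℝ) :
    v ᵥ* (c • M) = c • (v ᵥ* M) := by
  ext j
  simp only [Matrix.vecMul, dotProduct, Matrix.smul_apply, Pi.smul_apply, smul_eq_mul,
    Finset.mul_sum]
  exact Finset.sum_congr rfl fun i _ => by ring

private lemma my_sum_mulVec {ι : Type*} (s : Finset ι) (v : Fin n → ℝ)
    (M : ι → Matrix (Fin n) (Fin n) ℝ) :
    (∑ i ∈ s, M i) *ᵥ v = ∑ i ∈ s, M i *ᵥ v := by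
  ext j
  simp only [Matrix.mulVec, dotProduct, Finset.sum_apply, Matrix.sum_apply,
    Finset.sum_mul]
  rw [Finset.sum_comm]

private lemma my_dotProduct_sum {ι : Type*} (s : Finset ι) (v : Fin n → ℝ)
    (w : ι → (Fin n → ℝ)) :
    v ⬝ᵥ (∑ i ∈ s, w i) = ∑ i ∈ s, v ⬝ᵥ w i := by
  simp only [dotProduct, Finset.sum_apply, Finset.mul_sum]
  rw [Finset.sum_comm]

private lemma my_dotProduct_self_nonneg (v : Fin m → ℝ) : 0 ≤ v ⬝ᵥ v :=
  Finset.sum_nonneg fun i _ => mul_self_nonneg _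

/-- Cayley–Hamilton extension. -/
private lemma vecMul_pow_eq_zero (hn : 1 ≤ n) (A : Matrix (Fin n) (Fin n) ℝ)
    (B : Matrix (Fin n) (Fin m) ℝ) (v : Fin n → ℝ)
    (h0 : ∀ t < n, v ᵥ* (A ^ t * B) = 0) : ∀ t, v ᵥ* (A ^ t * B) = 0 := by
  have hdeg : A.charpoly.natDegree = n := by simpa using A.charpoly_natDegree_eq_dim
  have hCH : A ^ n = -∑ i ∈ Finset.range n, A.charpoly.coeff i • A ^ i := by
    have h := A.aeval_self_charpoly
    rw [Polynomial.aeval_eq_sum_range, hdeg, Finset.sum_range_succ] at h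
    have hlead : A.charpoly.coeff n = 1 := by
      have h2 := A.charpoly_monic.leadingCoeff
      rwa [Polynomial.leadingCoeff, hdeg] at h2
    rw [hlead, one_smul] at h
    exact eq_neg_of_add_eq_zero_right h
  intro t
  induction t using Nat.strong_induction_on with
  | _ t ih =>
    by_cases hlt : t < n
    · exact h0 t hlt
    · push_neg at hlt
      have hA : A ^ t * B = -∑ i ∈ Finset.range n, A.charpoly.coeff i • (A ^ (t - n + i) * B) := by
        have ht : A ^ t = A ^ (t - n) * A ^ n := by rw [← pow_add]; congr 1; omega
        rw [ht, hCH]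
        simp only [mul_neg, neg_mul, Matrix.neg_mul, Finset.mul_sum, Finset.sum_mul,
          Matrix.sum_mul, mul_smul_comm, smul_mul_assoc, Matrix.smul_mul, pow_add, mul_assoc]
      rw [hA, vecMul_neg, my_vecMul_sum]
      rw [Finset.sum_eq_zero, neg_zero]
      intro i hi
      rw [my_smul_vecMul, ih (t - n + i) (by simp at hi; omega)]
      simp

end aux

/-- Sufficient condition for controllability: for `n ≥ 2`, if the grammian
`W T = ∑_{t<T} Aᵗ B Bᵀ (Aᵀ)ᵗ` is nonzero and
`trace (W T²) / (trace (W T))² < 1 / (n - 1)` for some `T ≥ 1`, then the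
controllability matrix `[B, AB, ..., A^{n-1} B]` has rank `n`. -/
theorem stmt_17 (n m : ℕ) (hn : 2 ≤ n)
    (A : Matrix (Fin n) (Fin n) ℝ) (B : Matrix (Fin n) (Fin m) ℝ)
    (W : ℕ → Matrix (Fin n) (Fin n) ℝ)
    (hW : ∀ T, W T = ∑ t ∈ Finset.range T, A ^ t * B * Bᵀ * Aᵀ ^ t)
    (T : ℕ) (hT : 1 ≤ T) (hWne : W T ≠ 0)
    (hμ : (W T * W T).trace / (W T).trace ^ 2 < 1 / ((n : ℝ) - 1)) :
    (Matrix.of fun (i : Fin n) (p : Fin n × Fin m) =>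
        (A ^ (p.1 : ℕ) * B) i p.2).rank = n := by
  -- each grammian term is `M * Mᵀ`
  have hterm : ∀ t, A ^ t * B * Bᵀ * Aᵀ ^ t = (A ^ t * B) * (A ^ t * B)ᵀ := by
    intro t
    rw [transpose_mul, transpose_pow, Matrix.mul_assoc]
  -- positive semidefiniteness
  have hpsd : ∀ S, (W S).PosSemidef := by
    intro S
    rw [hW]
    refine Finset.sum_induction _ _ (fun a b ha hb => ha.add hb) Matrix.PosSemidef.zero ?_
    intro t _
    rw [hterm]
    have := Matrix.posSemidef_self_mul_conjTranspose (A ^ t * B)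
    rwa [conjTranspose_eq_transpose_of_trivial] at this
  -- quadratic form
  have hquad : ∀ (S : ℕ) (v : Fin n → ℝ),
      v ⬝ᵥ (W S *ᵥ v) = ∑ t ∈ Finset.range S, (v ᵥ* (A ^ t * B)) ⬝ᵥ (v ᵥ* (A ^ t * B)) := by
    intro S v
    rw [hW, my_sum_mulVec, my_dotProduct_sum]
    refine Finset.sum_congr rfl fun t _ => ?_
    rw [hterm, ← mulVec_mulVec, dotProduct_mulVec, mulVec_transpose]
  -- `rank (W T) = n` via the eigenvalue Cauchy–Schwarz inequality
  have hn1 : (0:ℝ) < (n:ℝ) - 1 := by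
    have : (2:ℝ) ≤ n := by exact_mod_cast hn
    linarith
  have hrankT : (W T).rank = n := by
    by_contra hne
    have hle : (W T).rank ≤ n := by
      simpa using (W T).rank_le_card_width
    have hr1 : (W T).rank ≤ n - 1 := by omega
    have hH := (hpsd T).1
    set lam := hH.eigenvalues with hlam
    have hlam0 : ∀ i, 0 ≤ lam i := (hpsd T).eigenvalues_nonneg
    set s : Finset (Fin n) := Finset.univ.filter (fun i => lam i ≠ 0) with hs
    have hcard : s.card = (W T).rank := by
      rw [hH.rank_eq_card_non_zero_eigs, Fintype.card_subtype]
    have htr : (W T).trace = ∑ i ∈ s, lam i := by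
      rw [trace_herm hH, hs]
      exact (Finset.sum_filter_ne_zero _).symm
    have htrsq : (W T * W T).trace = ∑ i, lam i ^ 2 := trace_herm_sq hH
    have htrnn : 0 ≤ (W T).trace := by
      rw [trace_herm hH]; exact Finset.sum_nonneg fun i _ => hlam0 i
    have htrne : (W T).trace ≠ 0 := by
      intro h0
      apply hWne
      have hall : ∀ i, lam i = 0 := by
        rw [trace_herm hH] at h0
        intro i
        exact (Finset.sum_eq_zero_iff_of_nonneg (fun i _ => hlam0 i)).mp h0 i (Finset.mem_univ i)
      conv_lhs => rw [hH.spectral_theorem]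
      have : (RCLike.ofReal ∘ lam : Fin n → ℝ) = fun _ => 0 := by
        funext i; simp [hall i]
      rw [this]
      simp [Matrix.diagonal_zero]
    have htrpos : 0 < (W T).trace := lt_of_le_of_ne htrnn (Ne.symm htrne)
    have hsqnn : 0 ≤ ∑ i, lam i ^ 2 := Finset.sum_nonneg fun i _ => sq_nonneg _
    have hCS : ((W T).trace) ^ 2 ≤ ((W T).rank : ℝ) * (W T * W T).trace := by
      rw [htr, htrsq]
      calc (∑ i ∈ s, lam i) ^ 2 ≤ (s.card : ℝ) * ∑ i ∈ s, lam i ^ 2 := by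
            exact_mod_cast sq_sum_le_card_mul_sum_sq (s := s) (f := lam)
        _ ≤ ((W T).rank : ℝ) * ∑ i, lam i ^ 2 := by
            rw [hcard]
            refine mul_le_mul_of_nonneg_left ?_ (by positivity)
            exact Finset.sum_le_sum_of_subset_of_nonneg (Finset.subset_univ _)
              (fun i _ _ => sq_nonneg _)
    have hrcast : ((W T).rank : ℝ) ≤ (n:ℝ) - 1 := by
      have : ((W T).rank : ℝ) ≤ ((n - 1 : ℕ) : ℝ) := by exact_mod_cast hr1
      rw [Nat.cast_sub (by omega)] at this
      simpa using this
    have h3 : ((W T).trace) ^ 2 ≤ ((n:ℝ) - 1) * (W T * W T).trace := by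
      refine hCS.trans ?_
      refine mul_le_mul_of_nonneg_right hrcast ?_
      rw [htrsq]; exact hsqnn
    have h4 : (1:ℝ) / ((n:ℝ) - 1) ≤ (W T * W T).trace / (W T).trace ^ 2 := by
      rw [div_le_div_iff₀ hn1 (by positivity)]
      linarith
    exact absurd hμ (not_lt.mpr h4)
  -- kernel of `W n` is trivial
  have hinj : ∀ v : Fin n → ℝ, W n *ᵥ v = 0 → v = 0 := by
    intro v hv
    have hq : v ⬝ᵥ (W n *ᵥ v) = 0 := by rw [hv, dotProduct_zero]
    rw [hquad] at hq
    have hz : ∀ t < n, v ᵥ* (A ^ t * B) = 0 := by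
      intro t ht
      have h1 := (Finset.sum_eq_zero_iff_of_nonneg
        (fun t _ => my_dotProduct_self_nonneg _)).mp hq t (Finset.mem_range.mpr ht)
      exact dotProduct_self_eq_zero.mp h1
    have hall := vecMul_pow_eq_zero (by omega) A B v hz
    have hqT : v ⬝ᵥ (W T *ᵥ v) = 0 := by
      rw [hquad]
      refine Finset.sum_eq_zero fun t _ => ?_
      rw [hall t, zero_dotProduct]
    have hWTv : W T *ᵥ v = 0 := by
      refine ((hpsd T).dotProduct_mulVec_zero_iff v).mp ?_
      simpa using hqT
    -- `W T` has full rank, hence injective `mulVec`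
    have hker : LinearMap.ker (W T).mulVecLin = ⊥ := by
      have h1 := LinearMap.finrank_range_add_finrank_ker (W T).mulVecLin
      have h2 : Module.finrank ℝ (Fin n → ℝ) = n := by simp
      have h3 : Module.finrank ℝ (LinearMap.range (W T).mulVecLin) = n := hrankT
      rw [h2, h3] at h1
      have h4 : Module.finrank ℝ (LinearMap.ker (W T).mulVecLin) = 0 := by omega
      exact Submodule.finrank_eq_zero.mp h4
    have : v ∈ LinearMap.ker (W T).mulVecLin := by
      rw [LinearMap.mem_ker, mulVecLin_apply, hWTv]
    rwa [hker, Submodule.mem_bot] at this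
  -- hence `rank (W n) = n`
  have hrankWn : (W n).rank = n := by
    have hker : LinearMap.ker (W n).mulVecLin = ⊥ := by
      rw [Submodule.eq_bot_iff]
      intro v hv
      rw [LinearMap.mem_ker, mulVecLin_apply] at hv
      exact hinj v hv
    have h1 := LinearMap.finrank_range_add_finrank_ker (W n).mulVecLin
    rw [hker, finrank_bot] at h1
    have h2 : Module.finrank ℝ (Fin n → ℝ) = n := by simp
    rw [h2] at h1
    have : (W n).rank = Module.finrank ℝ (LinearMap.range (W n).mulVecLin) := rfl
    omega
  -- the controllability matrix `K` satisfies `K * Kᵀ = W n`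
  set K : Matrix (Fin n) (Fin n × Fin m) ℝ :=
    Matrix.of fun (i : Fin n) (p : Fin n × Fin m) => (A ^ (p.1 : ℕ) * B) i p.2 with hK
  have hKK : K * Kᵀ = W n := by
    have hWn : W n = ∑ t ∈ Finset.range n, (A ^ t * B) * (A ^ t * B)ᵀ := by
      rw [hW]; exact Finset.sum_congr rfl fun t _ => hterm t
    rw [hWn, ← Fin.sum_univ_eq_sum_range]
    ext i j
    simp only [Matrix.mul_apply, Matrix.sum_apply, transpose_apply, hK, Matrix.of_apply,
      Fintype.sum_prod_type]
  rw [← rank_self_mul_transpose, hKK, hrankWn]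
end
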